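/- arXiv:2105.12893 — 2 statements merged into one kernel-verified Lean document; each statement's English description precedes it below -/
import Mathlib

section
/- Let 𝓔̂_m = { θ_i : sup_{x∈ℝ} |F_n^{θ_i}(x) − F_N^{θ₀}(x)| ≤ q_{1−α}/√N } be the eligibility set constructed from an i.i.d. real sample of size N from F^{θ₀}, independent i.i.d. simulated samples of size n from each F^{θ_i}, and candidates θ₁,…,θ_m. If m = o(N) and n = Ω(N) as N → ∞, then lim_{m,n,N→∞} ℙ( ∃ i ∈ {1,…,m} such that sup_{x∈ℝ} |F^{θ_i}(x) − F^{θ₀}(x)| > √(log m / m) and θ_i ∈ 𝓔̂_m ) = 0. -/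
open MeasureTheory ProbabilityTheory Filter

/-- Empirical distribution function of the first `M` terms of a sequence of
real-valued random variables. -/
noncomputable def ecdfSeq {Ω : Type*} (Z : ℕ → Ω → ℝ) (M : ℕ) (ω : Ω) (x : ℝ) : ℝ :=
  (M : ℝ)⁻¹ * ∑ i ∈ Finset.range M, if Z i ω ≤ x then (1 : ℝ) else 0


/-!
Fix a candidate whose CDF is more than `δ = √(log m / m)` away from the true one and pick a point
`x`, depending only on the candidate, where the gap exceeds `δ`. Once `q / √N ≤ δ / 2`, eligibility
forces one of the two empirical CDFs to miss its own CDF at `x` by at least `δ / 4`, which by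
Hoeffding's inequality has probability at most `2 exp (-n δ² / 8) + 2 exp (-N δ² / 8)`. With
`n ≥ c N`, a union bound over the `m` candidates gives `4 m exp (-(c / 8) (N / m) log m)`, and this
tends to `0` because `N / m → ∞`.
-/

open Real Set
open scoped NNReal Topology

lemma mul_ecdfSeq_sub {Ω : Type*} (Z : ℕ → Ω → ℝ) (M : ℕ) (ω : Ω) (x p : ℝ) :
    M * (ecdfSeq Z M ω x - p) = ∑ j ∈ Finset.range M, ((Iic x).indicator 1 (Z j ω) - p) := by
  rcases M.eq_zero_or_pos with rfl | hM
  · simp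
  · simp [ecdfSeq, Finset.sum_sub_distrib, mul_sub, indicator_apply, hM.ne']

lemma ecdfSeq_mem_Icc {Ω : Type*} (Z : ℕ → Ω → ℝ) (M : ℕ) (ω : Ω) (x : ℝ) :
    ecdfSeq Z M ω x ∈ Icc 0 1 := by
  rcases M.eq_zero_or_pos with rfl | hM
  · simp [ecdfSeq]
  refine ⟨by unfold ecdfSeq; positivity, ?_⟩
  calc ecdfSeq Z M ω x ≤ (M : ℝ)⁻¹ * ∑ _j ∈ Finset.range M, (1 : ℝ) := by
        unfold ecdfSeq
        gcongr with j
        split_ifs <;> norm_num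
    _ = 1 := by simp [hM.ne']

lemma bddAbove_range_abs_ecdfSeq_sub {Ω : Type*} (Z Z' : ℕ → Ω → ℝ) (M M' : ℕ) (ω : Ω) :
    BddAbove (range fun x => |ecdfSeq Z M ω x - ecdfSeq Z' M' ω x|) := by
  refine ⟨1, forall_mem_range.2 fun x => ?_⟩
  obtain ⟨h₀, h₁⟩ := ecdfSeq_mem_Icc Z M ω x
  obtain ⟨h₀', h₁'⟩ := ecdfSeq_mem_Icc Z' M' ω x
  exact abs_sub_le_iff.2 ⟨by linarith, by linarith⟩

lemma quarter_lt_abs_sub_or_of_lt_abs_sub {a b a' b' δ : ℝ} (h : δ < |a - b|)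
    (h' : |a' - b'| ≤ δ / 2) : δ / 4 < |a' - a| ∨ δ / 4 < |b' - b| := by
  by_contra! hle
  have := abs_sub_le a a' b
  have := abs_sub_le a' b' b
  rw [abs_sub_comm] at hle
  linarith [hle.1, hle.2]

section Hoeffding

variable {Ω : Type*} [MeasurableSpace Ω] {P : Measure Ω}

lemma measureReal_exists_lt_le_sum (p : ℕ → Ω → Prop) (M : ℕ) :
    P.real {ω | ∃ i < M, p i ω} ≤ ∑ i ∈ Finset.range M, P.real {ω | p i ω} := by
  convert measureReal_biUnion_finset_le (μ := P) (Finset.range M) (fun i => {ω | p i ω}) using 2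
  ext
  simp

lemma measure_abs_sum_range_ge_le_of_iIndepFun [IsFiniteMeasure P] {X : ℕ → Ω → ℝ}
    (h_indep : iIndepFun X P) {c : ℝ≥0} {M : ℕ}
    (h_subG : ∀ j < M, HasSubgaussianMGF (X j) c P) {ε : ℝ} (hε : 0 ≤ ε) :
    P.real {ω | ε ≤ |∑ j ∈ Finset.range M, X j ω|} ≤ 2 * exp (-ε ^ 2 / (2 * M * c)) := by
  have h_indep_neg : iIndepFun (fun j => -X j) P :=
    h_indep.comp (fun _ => Neg.neg) (fun _ => measurable_neg)
  calc P.real {ω | ε ≤ |∑ j ∈ Finset.range M, X j ω|}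
      ≤ P.real ({ω | ε ≤ ∑ j ∈ Finset.range M, X j ω} ∪
          {ω | ε ≤ ∑ j ∈ Finset.range M, (-X j) ω}) := by
        refine measureReal_mono (fun ω hω => ?_)
        simpa [Finset.sum_neg_distrib, le_abs] using hω
    _ ≤ _ := measureReal_union_le _ _
    _ ≤ 2 * exp (-ε ^ 2 / (2 * M * c)) := by
        rw [two_mul]
        exact add_le_add
          (HasSubgaussianMGF.measure_sum_range_ge_le_of_iIndepFun h_indep h_subG hε)
          (HasSubgaussianMGF.measure_sum_range_ge_le_of_iIndepFun h_indep_neg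
            (fun j hj => (h_subG j hj).neg) hε)

variable [IsProbabilityMeasure P]

lemma measure_abs_ecdfSeq_sub_ge_le {ρ : Measure ℝ} {Z : ℕ → Ω → ℝ}
    (hZm : ∀ j, Measurable (Z j)) (hZi : iIndepFun Z P) (hZd : ∀ j, P.map (Z j) = ρ)
    (M : ℕ) (x : ℝ) {s : ℝ} (hs : 0 ≤ s) :
    P.real {ω | s ≤ |ecdfSeq Z M ω x - (ρ (Iic x)).toReal|} ≤ 2 * exp (-2 * M * s ^ 2) := by
  set g : ℝ → ℝ := (Iic x).indicator 1
  have hg : Measurable g := measurable_one.indicator measurableSet_Iic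
  have h_mean : ∀ j, P[fun ω => g (Z j ω)] = (ρ (Iic x)).toReal := fun j => by
    rw [← integral_map (hZm j).aemeasurable hg.aestronglyMeasurable, hZd j,
      integral_indicator_one measurableSet_Iic, measureReal_def]
  have h_subG : ∀ j, HasSubgaussianMGF (fun ω => g (Z j ω) - (ρ (Iic x)).toReal)
      ((‖(1 : ℝ) - 0‖₊ / 2) ^ 2) P := fun j => by
    rw [← h_mean j]
    refine hasSubgaussianMGF_of_mem_Icc (hg.comp (hZm j)).aemeasurable
      (ae_of_all _ fun ω => ?_)
    by_cases h : Z j ω ≤ x <;> simp [g, h]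
  have h_indep : iIndepFun (fun j ω => g (Z j ω) - (ρ (Iic x)).toReal) P :=
    hZi.comp (fun _ y => g y - (ρ (Iic x)).toReal) (fun _ => hg.sub_const _)
  calc P.real {ω | s ≤ |ecdfSeq Z M ω x - (ρ (Iic x)).toReal|}
      ≤ P.real {ω | M * s ≤ |M * (ecdfSeq Z M ω x - (ρ (Iic x)).toReal)|} := by
        refine measureReal_mono (fun ω (hω : s ≤ _) => ?_)
        rw [mem_ofPred_eq, abs_mul, Nat.abs_cast]
        gcongr
    _ ≤ 2 * exp (-(M * s) ^ 2 / (2 * M * ((‖(1 : ℝ) - 0‖₊ / 2) ^ 2 : ℝ≥0))) := by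
        simp_rw [mul_ecdfSeq_sub]
        exact measure_abs_sum_range_ge_le_of_iIndepFun h_indep (fun j _ => h_subG j)
          (by positivity)
    _ = 2 * exp (-2 * M * s ^ 2) := by
        rcases M.eq_zero_or_pos with rfl | hM
        · simp
        · rw [show (((‖(1 : ℝ) - 0‖₊ / 2) ^ 2 : ℝ≥0) : ℝ) = 1 / 4 by norm_num]
          congr 2
          field_simp
          ring

end Hoeffding

section Eligibility

variable {Ω : Type*} [MeasurableSpace Ω] {P : Measure Ω} [IsProbabilityMeasure P]
  {μ : Measure ℝ} {X : ℕ → Ω → ℝ}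

lemma measure_far_and_eligible_le {ν : Measure ℝ} {Y : ℕ → Ω → ℝ}
    (hXm : ∀ k, Measurable (X k)) (hYm : ∀ j, Measurable (Y j))
    (hXi : iIndepFun X P) (hYi : iIndepFun Y P)
    (hX : ∀ k, P.map (X k) = μ) (hY : ∀ j, P.map (Y j) = ν) (N n : ℕ) {δ ε : ℝ}
    (hδ : 0 ≤ δ) (hε : ε ≤ δ / 2) :
    P.real {ω | δ < (⨆ x : ℝ, |(ν (Iic x)).toReal - (μ (Iic x)).toReal|) ∧
        (⨆ x : ℝ, |ecdfSeq Y n ω x - ecdfSeq X N ω x|) ≤ ε} ≤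
      2 * exp (-2 * n * (δ / 4) ^ 2) + 2 * exp (-2 * N * (δ / 4) ^ 2) := by
  by_cases hfar : δ < ⨆ x : ℝ, |(ν (Iic x)).toReal - (μ (Iic x)).toReal|
  · obtain ⟨x, hx⟩ := exists_lt_of_lt_ciSup hfar
    calc _ ≤ P.real ({ω | δ / 4 ≤ |ecdfSeq Y n ω x - (ν (Iic x)).toReal|} ∪
            {ω | δ / 4 ≤ |ecdfSeq X N ω x - (μ (Iic x)).toReal|}) := by
          refine measureReal_mono fun ω ⟨_, hω⟩ => ?_
          have hclose := (le_ciSup (bddAbove_range_abs_ecdfSeq_sub Y X n N ω) x).trans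
            (hω.trans hε)
          exact (quarter_lt_abs_sub_or_of_lt_abs_sub hx hclose).imp le_of_lt le_of_lt
      _ ≤ _ := measureReal_union_le _ _
      _ ≤ _ := add_le_add
          (measure_abs_ecdfSeq_sub_ge_le hYm hYi hY n x (by positivity))
          (measure_abs_ecdfSeq_sub_ge_le hXm hXi hX N x (by positivity))
  · have hempty : {ω | δ < (⨆ x : ℝ, |(ν (Iic x)).toReal - (μ (Iic x)).toReal|) ∧
        (⨆ x : ℝ, |ecdfSeq Y n ω x - ecdfSeq X N ω x|) ≤ ε} = ∅ := by
      simp [hfar]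
    rw [hempty, measureReal_empty]
    positivity

lemma measure_exists_far_and_eligible_le {ν : ℕ → Measure ℝ} {Y : ℕ → ℕ → Ω → ℝ}
    (hXm : ∀ k, Measurable (X k)) (hYm : ∀ i j, Measurable (Y i j))
    (hXi : iIndepFun X P) (hYi : ∀ i, iIndepFun (Y i) P)
    (hX : ∀ k, P.map (X k) = μ) (hY : ∀ i j, P.map (Y i j) = ν i) (M N n : ℕ) {c δ ε : ℝ}
    (hc : c ≤ 1) (hcn : c * N ≤ n) (hδ : 0 ≤ δ) (hε : ε ≤ δ / 2) :
    P.real {ω | ∃ i < M, δ < (⨆ x : ℝ, |(ν i (Iic x)).toReal - (μ (Iic x)).toReal|) ∧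
        (⨆ x : ℝ, |ecdfSeq (Y i) n ω x - ecdfSeq X N ω x|) ≤ ε} ≤
      4 * M * exp (-2 * c * N * (δ / 4) ^ 2) := by
  have hcN : c * N ≤ N := mul_le_of_le_one_left N.cast_nonneg hc
  have hexp_le : ∀ K : ℝ, c * N ≤ K → exp (-2 * K * (δ / 4) ^ 2) ≤ exp (-2 * c * N * (δ / 4) ^ 2) :=
    fun K hK => exp_le_exp.2 (by nlinarith [mul_le_mul_of_nonneg_right hK (sq_nonneg (δ / 4))])
  calc _ ≤ ∑ i ∈ Finset.range M,
        (2 * exp (-2 * n * (δ / 4) ^ 2) + 2 * exp (-2 * N * (δ / 4) ^ 2)) :=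
        (measureReal_exists_lt_le_sum _ M).trans <| Finset.sum_le_sum fun i _ =>
          measure_far_and_eligible_le hXm (hYm i) hXi (hYi i) hX (hY i) N n hδ hε
    _ ≤ ∑ _i ∈ Finset.range M, 4 * exp (-2 * c * N * (δ / 4) ^ 2) := by
        gcongr with i
        linarith [hexp_le n hcn, hexp_le N hcN]
    _ = 4 * M * exp (-2 * c * N * (δ / 4) ^ 2) := by
        simp [mul_assoc, mul_left_comm]

end Eligibility

lemma tendsto_div_atTop_of_tendsto_div_nhds_zero {ι : Type*} {l : Filter ι} {f g : ι → ℝ}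
    (h : Tendsto (fun k => f k / g k) l (𝓝 0)) (hpos : ∀ᶠ k in l, 0 < f k / g k) :
    Tendsto (fun k => g k / f k) l atTop := by
  simpa only [Pi.inv_def, inv_div] using
    (tendsto_nhdsWithin_iff.2 ⟨h, hpos⟩).inv_tendsto_nhdsGT_zero

lemma tendsto_mul_exp_neg_mul_log {ι : Type*} {l : Filter ι} {a b : ι → ℝ}
    (ha : Tendsto a l atTop) (hb : Tendsto b l atTop) :
    Tendsto (fun k => a k * exp (-(b k * log (a k)))) l (𝓝 0) := by
  refine squeeze_zero' ?_ ?_ (tendsto_inv_atTop_zero.comp ha)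
  · filter_upwards [ha.eventually_gt_atTop 0] with k hk
    positivity
  filter_upwards [ha.eventually_ge_atTop 1, hb.eventually_ge_atTop 2] with k hk1 hb2
  have hk : 0 < a k := by linarith
  have hlog : 0 ≤ log (a k) := log_nonneg hk1
  calc a k * exp (-(b k * log (a k))) = exp ((1 - b k) * log (a k)) := by
        rw [sub_mul, one_mul, exp_sub, exp_log hk, div_eq_mul_inv, exp_neg]
    _ ≤ exp (-log (a k)) := by gcongr; nlinarith
    _ = (a k)⁻¹ := by rw [exp_neg, exp_log hk]

lemma div_sqrt_le_half_sqrt {q N r : ℝ} (hN : 0 < N) (hr : 0 ≤ r) (h : 4 * q ^ 2 ≤ N * r) :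
    q / √N ≤ √r / 2 := by
  rw [div_le_iff₀ (sqrt_pos.2 hN)]
  have hprod : 0 ≤ √r * √N := by positivity
  nlinarith [sq_sqrt hr, sq_sqrt hN.le]

theorem stmt_6_general
    {Ω : Type*} [MeasurableSpace Ω] (Pr : Measure Ω) [IsProbabilityMeasure Pr]
    (μ : Measure ℝ)
    (ν : ℕ → Measure ℝ)
    (X : ℕ → Ω → ℝ) (Y : ℕ → ℕ → Ω → ℝ)
    (hXm : ∀ i, Measurable (X i)) (hYm : ∀ i j, Measurable (Y i j))
    (hindep : iIndepFun
      (Sum.elim X (fun p : ℕ × ℕ => Y p.1 p.2)) Pr)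
    (hX : ∀ k, Measure.map (X k) Pr = μ) (hY : ∀ i j, Measure.map (Y i j) Pr = ν i)
    (q : ℝ)
    (m n : ℕ → ℕ)
    (hm : Tendsto m atTop atTop)
    -- `m = o(N)`
    (hmN : Tendsto (fun N => (m N : ℝ) / (N : ℝ)) atTop (nhds 0))
    -- `n = Ω(N)`
    (hnN : ∃ c > (0 : ℝ), ∀ᶠ N : ℕ in atTop, c * (N : ℝ) ≤ (n N : ℝ)) :
    Tendsto (fun N =>
      (Pr {ω | ∃ i < m N,
        Real.sqrt (Real.log (m N) / (m N : ℝ)) <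
          (⨆ x : ℝ, |(ν i (Set.Iic x)).toReal - (μ (Set.Iic x)).toReal|) ∧
        (⨆ x : ℝ, |ecdfSeq (Y i) (n N) ω x - ecdfSeq X N ω x|) ≤ q / Real.sqrt N}).toReal)
      atTop (nhds 0) := by
  obtain ⟨c, hc0, hc1, hcn⟩ : ∃ c > (0 : ℝ), c ≤ 1 ∧ ∀ᶠ N : ℕ in atTop, c * N ≤ n N := by
    obtain ⟨c, hc0, hcn⟩ := hnN
    exact ⟨min c 1, lt_min hc0 one_pos, min_le_right _ _, hcn.mono fun N hN =>
      (mul_le_mul_of_nonneg_right (min_le_left _ _) N.cast_nonneg).trans hN⟩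
  have hXi : iIndepFun X Pr := hindep.precomp (g := Sum.inl) Sum.inl_injective
  have hYi (i : ℕ) : iIndepFun (Y i) Pr :=
    hindep.precomp (g := fun j => Sum.inr (i, j))
      (Sum.inr_injective.comp (Prod.mk_right_injective i))
  have hmR : Tendsto (fun N => (m N : ℝ)) atTop atTop := tendsto_natCast_atTop_atTop.comp hm
  have hNm : Tendsto (fun N : ℕ => (N : ℝ) / m N) atTop atTop := by
    refine tendsto_div_atTop_of_tendsto_div_nhds_zero hmN ?_
    filter_upwards [hmR.eventually_gt_atTop 0, eventually_gt_atTop 0] with N hm0 hN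
    exact div_pos hm0 (Nat.cast_pos.2 hN)
  have hlim := (tendsto_mul_exp_neg_mul_log hmR
    (hNm.const_mul_atTop (by positivity : 0 < c / 8))).const_mul 4
  rw [mul_zero] at hlim
  refine squeeze_zero' (Eventually.of_forall fun _ => ENNReal.toReal_nonneg) ?_ hlim
  filter_upwards [hcn, hmR.eventually_gt_atTop 0,
    (tendsto_log_atTop.comp hmR).eventually_ge_atTop 1, hNm.eventually_ge_atTop (4 * q ^ 2),
    eventually_gt_atTop 0] with N hcnN hm0 hlog hq hN
  replace hlog : 1 ≤ log (m N) := hlog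
  have hlogm : 0 ≤ log (m N) / m N := div_nonneg (by linarith) hm0.le
  have hε : q / √N ≤ √(log (m N) / m N) / 2 := by
    refine div_sqrt_le_half_sqrt (by exact_mod_cast hN) hlogm ?_
    calc 4 * q ^ 2 ≤ N / m N := hq
      _ ≤ N / m N * log (m N) := le_mul_of_one_le_right (by positivity) hlog
      _ = N * (log (m N) / m N) := by ring
  refine (measure_exists_far_and_eligible_le hXm hYm hXi hYi hX hY (m N) N (n N) hc1 hcnN
    (sqrt_nonneg _) hε).trans_eq ?_
  rw [div_pow, sq_sqrt hlogm, mul_assoc]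
  congr 3
  ring

/-- **Corollary 3.** If `m = o(N)` and `n = Ω(N)`, then the probability that some candidate
`θᵢ` with `sup_x |F^{θᵢ}(x) - F^{θ₀}(x)| > √(log m / m)` lies in the eligibility set `𝓔̂_m`
tends to `0` as `m, n, N → ∞`. -/
theorem stmt_6
    {Ω : Type*} [MeasurableSpace Ω] (Pr : Measure Ω) [IsProbabilityMeasure Pr]
    (μ : Measure ℝ) [IsProbabilityMeasure μ]
    (ν : ℕ → Measure ℝ) [∀ i, IsProbabilityMeasure (ν i)]
    (X : ℕ → Ω → ℝ) (Y : ℕ → ℕ → Ω → ℝ)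
    (hXm : ∀ i, Measurable (X i)) (hYm : ∀ i j, Measurable (Y i j))
    (hindep : iIndepFun
      (Sum.elim X (fun p : ℕ × ℕ => Y p.1 p.2)) Pr)
    (hX : ∀ k, Measure.map (X k) Pr = μ) (hY : ∀ i j, Measure.map (Y i j) Pr = ν i)
    (α : ℝ) (hα : α ∈ Set.Ioo (0 : ℝ) 1)
    (q : ℝ) (hq0 : 0 < q)
    (hq : 2 * ∑' v : ℕ, (-1 : ℝ) ^ v * Real.exp (-2 * ((v : ℝ) + 1) ^ 2 * q ^ 2) = α)
    (m n : ℕ → ℕ)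
    (hm : Tendsto m atTop atTop) (hn : Tendsto n atTop atTop)
    -- `m = o(N)`
    (hmN : Tendsto (fun N => (m N : ℝ) / (N : ℝ)) atTop (nhds 0))
    -- `n = Ω(N)`
    (hnN : ∃ c > (0 : ℝ), ∀ᶠ N : ℕ in atTop, c * (N : ℝ) ≤ (n N : ℝ)) :
    Tendsto (fun N =>
      (Pr {ω | ∃ i < m N,
        Real.sqrt (Real.log (m N) / (m N : ℝ)) <
          (⨆ x : ℝ, |(ν i (Set.Iic x)).toReal - (μ (Set.Iic x)).toReal|) ∧
        (⨆ x : ℝ, |ecdfSeq (Y i) (n N) ω x - ecdfSeq X N ω x|) ≤ q / Real.sqrt N}).toReal)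
      atTop (nhds 0) :=
  stmt_6_general Pr μ ν X Y hXm hYm hindep hX hY q m n hm hmN hnN
end

section
/- Suppose that X₁,…,X_N is an i.i.d. sample from a distribution with CDF F^{θ₀} and Y₁^{θ},…,Y_n^{θ} is an independent i.i.d. sample from a distribution with CDF F^{θ}, with empirical distribution functions F_N^{θ₀} and F_n^{θ} respectively, and suppose sup_{x∈ℝ} |F^{θ}(x) − F^{θ₀}(x)| > 0. For any ε₁, ε₂ > 0 with ε₁ + ε₂ < sup_{x∈ℝ} |F^{θ}(x) − F^{θ₀}(x)|, if nN/(n+N) > (−(1/2)log(α/2)) / (sup_{x∈ℝ} |F^{θ}(x) − F^{θ₀}(x)| − ε₁ − ε₂)², then ℙ( sup_{x∈ℝ} |F_n^{θ}(x) − F_N^{θ₀}(x)| ≤ √((n+N)/(nN)) · √(−(1/2)log(α/2)) ) ≤ 2( e^{−2nε₁²} + e^{−2Nε₂²} ). -/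
open MeasureTheory ProbabilityTheory Filter

/-- Empirical distribution function of a finite sample of real-valued random variables. -/
noncomputable def ecdfFin {Ω : Type*} {M : ℕ} (Z : Fin M → Ω → ℝ) (ω : Ω) (x : ℝ) : ℝ :=
  (M : ℝ)⁻¹ * ∑ i, if Z i ω ≤ x then (1 : ℝ) else 0

/-!
The sample-size condition puts the critical value `c` below `KS - ε₁ - ε₂`, so there is a point
`x₀` with `|F^θ(x₀) - F^{θ₀}(x₀)| > c + ε₁ + ε₂`. If the test accepts, the empirical CDFs are
within `c` of each other at `x₀`, so by the triangle inequality one of them misses its true CDF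
at `x₀` by at least `ε₁` resp. `ε₂`. An empirical CDF at a fixed point is an average of independent
Bernoulli indicators, so Hoeffding's inequality bounds each of these two events.
-/

open Real Finset

namespace ProbabilityTheory

variable {Ω ι : Type*} [MeasurableSpace Ω] {μ : Measure Ω} {X : ι → Ω → ℝ}

theorem iIndepFun.measureReal_abs_sum_sub_integral_ge_le (h_indep : iIndepFun X μ)
    (hX : ∀ i, AEMeasurable (X i) μ) {a b : ℝ} (hab : ∀ i, ∀ᵐ ω ∂μ, X i ω ∈ Set.Icc a b)
    (s : Finset ι) {ε : ℝ} (hε : 0 ≤ ε) :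
    μ.real {ω | ε ≤ |∑ i ∈ s, (X i ω - μ[X i])|} ≤ 2 * exp (-2 * ε ^ 2 / (#s * (b - a) ^ 2)) := by
  have := h_indep.isProbabilityMeasure
  set Y : ι → Ω → ℝ := fun i ω ↦ X i ω - μ[X i]
  have hY_subG i : HasSubgaussianMGF (Y i) ((‖b - a‖₊ / 2) ^ 2) μ :=
    hasSubgaussianMGF_of_mem_Icc (hX i) (hab i)
  have hY_indep : iIndepFun Y μ :=
    h_indep.comp (fun i y ↦ y - ∫ ω, X i ω ∂μ) fun _ ↦ measurable_id.sub_const _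
  have hbound : exp (-ε ^ 2 / (2 * ((∑ _i ∈ s, (‖b - a‖₊ / 2) ^ 2 : NNReal) : ℝ))) =
      exp (-2 * ε ^ 2 / (#s * (b - a) ^ 2)) := by
    push_cast
    rw [Real.norm_eq_abs, div_pow, sq_abs, Finset.sum_const, nsmul_eq_mul]
    generalize (b - a) ^ 2 = d
    ring_nf
  have upper := HasSubgaussianMGF.measure_sum_ge_le_of_iIndepFun (s := s) hY_indep
    (fun i _ ↦ hY_subG i) hε
  have lower := HasSubgaussianMGF.measure_sum_ge_le_of_iIndepFun (s := s)
    (hY_indep.comp (fun _ x ↦ -x) fun _ ↦ measurable_neg) (fun i _ ↦ (hY_subG i).neg) hε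
  simp only [hbound, Function.comp_apply] at upper lower
  change μ.real {ω | ε ≤ |∑ i ∈ s, Y i ω|} ≤ _
  calc μ.real {ω | ε ≤ |∑ i ∈ s, Y i ω|}
      ≤ μ.real ({ω | ε ≤ ∑ i ∈ s, Y i ω} ∪ {ω | ε ≤ ∑ i ∈ s, -Y i ω}) := by
        refine measureReal_mono (fun ω hω ↦ ?_)
        simp only [Set.mem_union, Set.mem_ofPred_eq, Finset.sum_neg_distrib]
        exact le_abs.mp hω
    _ ≤ _ := (measureReal_union_le _ _).trans (by linarith [upper, lower])

end ProbabilityTheory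

section ecdf

variable {Ω : Type*} {m : ℕ} (Z : Fin m → Ω → ℝ)

lemma ecdfFin_eq_inv_mul_sum_indicator (ω : Ω) (x : ℝ) :
    ecdfFin Z ω x = (m : ℝ)⁻¹ * ∑ i, (Set.Iic x).indicator 1 (Z i ω) := by
  simp only [ecdfFin, Set.indicator_apply, Set.mem_Iic, Pi.one_apply]

lemma ecdfFin_mem_Icc (ω : Ω) (x : ℝ) : ecdfFin Z ω x ∈ Set.Icc 0 1 := by
  have hsum : ∑ i, (if Z i ω ≤ x then (1 : ℝ) else 0) ≤ m :=
    (Finset.sum_le_card_nsmul _ _ 1 fun i _ ↦ by split_ifs <;> norm_num).trans (by simp)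
  refine ⟨by unfold ecdfFin; positivity, inv_mul_le_one_of_le₀ hsum m.cast_nonneg⟩

lemma bddAbove_range_abs_ecdfFin_sub {n : ℕ} (Y : Fin n → Ω → ℝ) (ω : Ω) :
    BddAbove (Set.range fun x ↦ |ecdfFin Y ω x - ecdfFin Z ω x|) := by
  refine ⟨1, Set.forall_mem_range.mpr fun x ↦ abs_sub_le_iff.mpr ?_⟩
  have hY := ecdfFin_mem_Icc Y ω x
  have hZ := ecdfFin_mem_Icc Z ω x
  constructor <;> linarith [hY.1, hY.2, hZ.1, hZ.2]

variable [MeasurableSpace Ω] {P : Measure Ω}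

theorem measureReal_abs_ecdfFin_sub_ge_le (hm : 0 < m) (hZm : ∀ i, Measurable (Z i))
    (hindep : iIndepFun Z P) {ρ : Measure ℝ} (hZ : ∀ i, P.map (Z i) = ρ) (x : ℝ) {ε : ℝ}
    (hε : 0 ≤ ε) :
    P.real {ω | ε ≤ |ecdfFin Z ω x - ρ.real (Set.Iic x)|} ≤ 2 * exp (-2 * m * ε ^ 2) := by
  have := hindep.isProbabilityMeasure
  set W : Fin m → Ω → ℝ := fun i ↦ (Set.Iic x).indicator 1 ∘ Z i
  have hW_meas i : Measurable (W i) := (measurable_const.indicator measurableSet_Iic).comp (hZm i)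
  have hW_indep : iIndepFun W P := hindep.comp (fun _ ↦ (Set.Iic x).indicator 1) fun _ ↦
    measurable_const.indicator measurableSet_Iic
  have hW_mem i : ∀ᵐ ω ∂P, W i ω ∈ Set.Icc (0 : ℝ) 1 := ae_of_all _ fun ω ↦ by
    by_cases h : Z i ω ≤ x <;> simp [W, h]
  have hW_integral i : P[W i] = ρ.real (Set.Iic x) := by
    rw [← hZ i, map_measureReal_apply (hZm i) measurableSet_Iic, ← integral_indicator_one
      (measurableSet_Iic.preimage (hZm i))]
    rfl
  have hm_pos : (0 : ℝ) < m := Nat.cast_pos.mpr hm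
  have hsum ω : m * (ecdfFin Z ω x - ρ.real (Set.Iic x)) = ∑ i, (W i ω - P[W i]) := by
    simp only [ecdfFin_eq_inv_mul_sum_indicator, hW_integral, Finset.sum_sub_distrib,
      Finset.sum_const, Finset.card_univ, Fintype.card_fin, nsmul_eq_mul, mul_sub,
      mul_inv_cancel_left₀ hm_pos.ne']
    rfl
  have hsub : {ω | ε ≤ |ecdfFin Z ω x - ρ.real (Set.Iic x)|} ⊆
      {ω | m * ε ≤ |∑ i, (W i ω - P[W i])|} := fun ω hω ↦ by
    rw [Set.mem_ofPred_eq, ← hsum, abs_mul, abs_of_pos hm_pos]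
    exact mul_le_mul_of_nonneg_left hω hm_pos.le
  calc P.real {ω | ε ≤ |ecdfFin Z ω x - ρ.real (Set.Iic x)|}
      ≤ P.real {ω | m * ε ≤ |∑ i, (W i ω - P[W i])|} := measureReal_mono hsub
    _ ≤ 2 * exp (-2 * (m * ε) ^ 2 / (#(univ : Finset (Fin m)) * (1 - 0) ^ 2)) :=
        hW_indep.measureReal_abs_sum_sub_integral_ge_le (fun i ↦ (hW_meas i).aemeasurable)
          hW_mem _ (by positivity)
    _ = 2 * exp (-2 * m * ε ^ 2) := by
        rw [Finset.card_univ, Fintype.card_fin, sub_zero, one_pow, mul_one]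
        field_simp

end ecdf

lemma le_abs_sub_or_le_abs_sub {a b c p q e₁ e₂ : ℝ} (hab : |a - b| ≤ c)
    (hpq : c + e₁ + e₂ < |p - q|) : e₁ ≤ |a - p| ∨ e₂ ≤ |b - q| := by
  by_contra! ⟨ha, hb⟩
  linarith [abs_sub_le p a q, abs_sub_le a b q, abs_sub_comm p a]

lemma sqrt_div_mul_sqrt_lt {a b L K : ℝ} (hK : 0 < K) (hlt : L / K ^ 2 < b / a) :
    √(a / b) * √L < K := by
  rcases le_or_gt L 0 with hL | hL
  · rwa [Real.sqrt_eq_zero'.mpr hL, mul_zero]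
  have hba : 0 < b / a := (div_pos hL (pow_pos hK 2)).trans hlt
  rw [← Real.sqrt_mul' _ hL.le, Real.sqrt_lt' hK, ← inv_div, inv_mul_lt_iff₀ hba]
  rw [div_lt_iff₀ (pow_pos hK 2)] at hlt
  linarith

theorem stmt_8_general
    {Ω : Type*} [MeasurableSpace Ω] (Pr : Measure Ω) [IsProbabilityMeasure Pr]
    (μ ν : Measure ℝ)
    {N n : ℕ} (hN0 : 0 < N) (hn0 : 0 < n)
    (X : Fin N → Ω → ℝ) (Y : Fin n → Ω → ℝ)
    (hXm : ∀ i, Measurable (X i)) (hYm : ∀ j, Measurable (Y j))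
    (hindep : iIndepFun (Sum.elim X Y) Pr)
    (hX : ∀ i, Measure.map (X i) Pr = μ) (hY : ∀ j, Measure.map (Y j) Pr = ν)
    (α : ℝ)
    -- `KS` is the Kolmogorov–Smirnov distance between the CDFs `F^θ` and `F^{θ₀}`.
    (KS : ℝ) (hKS : KS = ⨆ x : ℝ, |(ν (Set.Iic x)).toReal - (μ (Set.Iic x)).toReal|)
    (ε₁ ε₂ : ℝ) (hε₁ : 0 < ε₁) (hε₂ : 0 < ε₂) (hεsum : ε₁ + ε₂ < KS)
    (hNlarge : ((n : ℝ) * N) / ((n : ℝ) + N) >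
      (-(1 / 2) * Real.log (α / 2)) / (KS - ε₁ - ε₂) ^ 2) :
    (Pr {ω | (⨆ x : ℝ, |ecdfFin Y ω x - ecdfFin X ω x|) ≤
        Real.sqrt (((n : ℝ) + N) / ((n : ℝ) * N)) *
          Real.sqrt (-(1 / 2) * Real.log (α / 2))}).toReal
      ≤ 2 * (Real.exp (-2 * n * ε₁ ^ 2) + Real.exp (-2 * N * ε₂ ^ 2)) := by
  have hX_indep : iIndepFun X Pr := iIndepFun.precomp (f := Sum.elim X Y) Sum.inl_injective hindep
  have hY_indep : iIndepFun Y Pr := iIndepFun.precomp (f := Sum.elim X Y) Sum.inr_injective hindep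
  set c := √(((n : ℝ) + N) / ((n : ℝ) * N)) * √(-(1 / 2) * Real.log (α / 2))
  have hc : c < KS - ε₁ - ε₂ := sqrt_div_mul_sqrt_lt (by linarith) hNlarge
  have hKS_gap : c + ε₁ + ε₂ < KS := by linarith
  rw [hKS] at hKS_gap
  obtain ⟨x₀, hx₀⟩ : ∃ x, c + ε₁ + ε₂ < |ν.real (Set.Iic x) - μ.real (Set.Iic x)| :=
    exists_lt_of_lt_ciSup hKS_gap
  have hsub : {ω | (⨆ x, |ecdfFin Y ω x - ecdfFin X ω x|) ≤ c} ⊆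
      {ω | ε₁ ≤ |ecdfFin Y ω x₀ - ν.real (Set.Iic x₀)|} ∪
        {ω | ε₂ ≤ |ecdfFin X ω x₀ - μ.real (Set.Iic x₀)|} :=
    fun ω hω ↦ le_abs_sub_or_le_abs_sub
      ((le_ciSup (bddAbove_range_abs_ecdfFin_sub X Y ω) x₀).trans hω) hx₀
  calc Pr.real {ω | (⨆ x, |ecdfFin Y ω x - ecdfFin X ω x|) ≤ c}
      ≤ Pr.real {ω | ε₁ ≤ |ecdfFin Y ω x₀ - ν.real (Set.Iic x₀)|} +
          Pr.real {ω | ε₂ ≤ |ecdfFin X ω x₀ - μ.real (Set.Iic x₀)|} :=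
        (measureReal_mono hsub).trans (measureReal_union_le _ _)
    _ ≤ 2 * exp (-2 * n * ε₁ ^ 2) + 2 * exp (-2 * N * ε₂ ^ 2) := add_le_add
        (measureReal_abs_ecdfFin_sub_ge_le Y hn0 hYm hY_indep hY x₀ hε₁.le)
        (measureReal_abs_ecdfFin_sub_ge_le X hN0 hXm hX_indep hX x₀ hε₂.le)
    _ = 2 * (exp (-2 * n * ε₁ ^ 2) + exp (-2 * N * ε₂ ^ 2)) := by ring

/-- **Theorem 5 (two-sample KS Type II error bound).** -/
theorem stmt_8
    {Ω : Type*} [MeasurableSpace Ω] (Pr : Measure Ω) [IsProbabilityMeasure Pr]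
    (μ ν : Measure ℝ) [IsProbabilityMeasure μ] [IsProbabilityMeasure ν]
    {N n : ℕ} (hN0 : 0 < N) (hn0 : 0 < n)
    (X : Fin N → Ω → ℝ) (Y : Fin n → Ω → ℝ)
    (hXm : ∀ i, Measurable (X i)) (hYm : ∀ j, Measurable (Y j))
    (hindep : iIndepFun (Sum.elim X Y) Pr)
    (hX : ∀ i, Measure.map (X i) Pr = μ) (hY : ∀ j, Measure.map (Y j) Pr = ν)
    (α : ℝ) (hα : α ∈ Set.Ioo (0 : ℝ) 1)
    -- `KS` is the Kolmogorov–Smirnov distance between the CDFs `F^θ` and `F^{θ₀}`.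
    (KS : ℝ) (hKS : KS = ⨆ x : ℝ, |(ν (Set.Iic x)).toReal - (μ (Set.Iic x)).toReal|)
    (hKSpos : 0 < KS)
    (ε₁ ε₂ : ℝ) (hε₁ : 0 < ε₁) (hε₂ : 0 < ε₂) (hεsum : ε₁ + ε₂ < KS)
    (hNlarge : ((n : ℝ) * N) / ((n : ℝ) + N) >
      (-(1 / 2) * Real.log (α / 2)) / (KS - ε₁ - ε₂) ^ 2) :
    (Pr {ω | (⨆ x : ℝ, |ecdfFin Y ω x - ecdfFin X ω x|) ≤
        Real.sqrt (((n : ℝ) + N) / ((n : ℝ) * N)) *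
          Real.sqrt (-(1 / 2) * Real.log (α / 2))}).toReal
      ≤ 2 * (Real.exp (-2 * n * ε₁ ^ 2) + Real.exp (-2 * N * ε₂ ^ 2)) :=
  stmt_8_general Pr μ ν hN0 hn0 X Y hXm hYm hindep hX hY α KS hKS ε₁ ε₂ hε₁ hε₂ hεsum hNlarge
end
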